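/- arXiv:2601.14116 — 2 statements merged into one kernel-verified Lean document; each statement's English description precedes it below -/
import Mathlib

section
/- Let X = {(x,y) ∈ (ℂ^×)² : 1 + x + y = 0}. Then the closure of the image of X under the coordinatewise angle map (x,y) ↦ (x/|x|, y/|y|), written in angular coordinates (θ₁, θ₂) ∈ (−π, π]², is the complement of the open set {(θ₁, θ₂) : −π < θ₁ < π, −π < θ₂ < π, |θ₁ − θ₂| < π} in the square; i.e., the closed angle set is the complement of an open zonotope. -/
open Complex Real

namespace ZonotopeAux

def A : Set (ℂ × ℂ) := {p : ℂ × ℂ |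
        ‖p.1‖ = 1 ∧ ‖p.2‖ = 1 ∧
        ∃ r₁ r₂ : ℝ, 0 < r₁ ∧ 0 < r₂ ∧
          1 + (r₁ : ℂ) * p.1 + (r₂ : ℂ) * p.2 = 0}

lemma memA {a b : ℝ} (ha0 : 0 < a) (haπ : a < π) (hbπ : -π < b) (hb0 : b < 0)
    (hab : π < a - b) : (Complex.exp (a * I), Complex.exp (b * I)) ∈ A := by
  have hsa : 0 < Real.sin a := Real.sin_pos_of_pos_of_lt_pi ha0 haπ
  have hsb : Real.sin b < 0 := by
    have : 0 < Real.sin (-b) := Real.sin_pos_of_pos_of_lt_pi (by linarith) (by linarith)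
    rw [Real.sin_neg] at this; linarith
  have hsab : Real.sin (a - b) < 0 := by
    have : 0 < Real.sin (a - b - π) :=
      Real.sin_pos_of_pos_of_lt_pi (by linarith) (by linarith)
    rw [show a - b - π = -(π - (a-b)) by ring, Real.sin_neg, Real.sin_pi_sub] at this
    linarith
  have hs : (Real.sin (a-b) : ℂ) ≠ 0 := by exact_mod_cast ne_of_lt hsab
  refine ⟨Complex.norm_exp_ofReal_mul_I a, Complex.norm_exp_ofReal_mul_I b,
    Real.sin b / Real.sin (a - b), -Real.sin a / Real.sin (a - b),
    div_pos_of_neg_of_neg hsb hsab, div_pos_of_neg_of_neg (by linarith) hsab, ?_⟩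
  have hmain : (Real.sin (a-b) : ℂ) + (Real.sin b : ℂ) * Complex.exp (a*I)
      + ((-Real.sin a : ℝ) : ℂ) * Complex.exp (b*I) = 0 := by
    apply Complex.ext <;>
      simp [Complex.exp_ofReal_mul_I_re, Complex.exp_ofReal_mul_I_im,
        Complex.sin_ofReal_re, Complex.sin_ofReal_im, Complex.cos_ofReal_re,
        Real.sin_sub] <;> ring
  have step : (1 : ℂ) + ((Real.sin b / Real.sin (a-b) : ℝ) : ℂ) * Complex.exp (a*I)
      + ((-Real.sin a / Real.sin (a-b) : ℝ) : ℂ) * Complex.exp (b*I)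
      = ((Real.sin (a-b) : ℂ) + (Real.sin b : ℂ) * Complex.exp (a*I)
      + ((-Real.sin a : ℝ) : ℂ) * Complex.exp (b*I)) / (Real.sin (a-b) : ℂ) := by
    rw [Complex.ofReal_div, Complex.ofReal_div]
    have hs2 : Complex.sin ((a:ℂ) - b) ≠ 0 := by
      rw [← Complex.ofReal_sub, ← Complex.ofReal_sin]; exact hs
    rw [eq_div_iff hs]
    field_simp [hs2]
  rw [step, hmain, zero_div]

lemma key {u v : ℂ} (h1 : u.arg < π) (h2 : v.arg < π)
    (h3 : |u.arg - v.arg| < π) : (u, v) ∉ A := by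
  rintro ⟨hu, hv, r₁, r₂, hr₁, hr₂, heq⟩
  set θ₁ := u.arg with hθ₁
  set θ₂ := v.arg with hθ₂
  have hl1 : -π < θ₁ := Complex.neg_pi_lt_arg u
  have hl2 : -π < θ₂ := Complex.neg_pi_lt_arg v
  obtain ⟨hd1, hd2⟩ := abs_lt.mp h3
  have hu0 : u ≠ 0 := by intro h; rw [h] at hu; simp at hu
  have hv0 : v ≠ 0 := by intro h; rw [h] at hv; simp at hv
  have hure : u.re = Real.cos θ₁ := by rw [Complex.cos_arg hu0, hu, div_one]
  have huim : u.im = Real.sin θ₁ := by rw [Complex.sin_arg, hu, div_one]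
  have hvre : v.re = Real.cos θ₂ := by rw [Complex.cos_arg hv0, hv, div_one]
  have hvim : v.im = Real.sin θ₂ := by rw [Complex.sin_arg, hv, div_one]
  set φ := min (π/2) (max (-(π/2)) ((θ₁+θ₂)/2)) with hφ
  have hπ := Real.pi_pos
  have hφ2 : φ ≤ π/2 := min_le_left _ _
  have hφ1 : -(π/2) ≤ φ := le_min (by linarith) (le_max_left _ _)
  have hA1 : min (π/2) ((θ₁+θ₂)/2) ≤ φ :=
    min_le_min (le_refl _) (le_max_right _ _)
  have hA2 : φ ≤ max (-(π/2)) ((θ₁+θ₂)/2) := min_le_right _ _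
  have hm1 : θ₁ - π/2 < min (π/2) ((θ₁+θ₂)/2) := lt_min (by linarith) (by linarith)
  have hm2 : θ₂ - π/2 < min (π/2) ((θ₁+θ₂)/2) := lt_min (by linarith) (by linarith)
  have hM1 : max (-(π/2)) ((θ₁+θ₂)/2) < θ₁ + π/2 := max_lt (by linarith) (by linarith)
  have hM2 : max (-(π/2)) ((θ₁+θ₂)/2) < θ₂ + π/2 := max_lt (by linarith) (by linarith)
  have hc1 : 0 < Real.cos (θ₁ - φ) :=
    Real.cos_pos_of_mem_Ioo ⟨by linarith, by linarith⟩
  have hc2 : 0 < Real.cos (θ₂ - φ) :=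
    Real.cos_pos_of_mem_Ioo ⟨by linarith, by linarith⟩
  have hc0 : 0 ≤ Real.cos φ := Real.cos_nonneg_of_mem_Icc ⟨hφ1, hφ2⟩
  have h := congrArg (fun z : ℂ => Real.cos φ * z.re + Real.sin φ * z.im) heq
  simp only [Complex.add_re, Complex.add_im, Complex.mul_re, Complex.mul_im,
    Complex.ofReal_re, Complex.ofReal_im, Complex.one_re, Complex.one_im,
    Complex.zero_re, Complex.zero_im] at h
  have hkey : Real.cos φ + r₁ * Real.cos (θ₁ - φ) + r₂ * Real.cos (θ₂ - φ) = 0 := by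
    rw [Real.cos_sub, Real.cos_sub, hure, huim, hvre, hvim] at *
    linear_combination h
  nlinarith [mul_pos hr₁ hc1, mul_pos hr₂ hc2]

lemma slit_of_unit {z : ℂ} (hz : ‖z‖ = 1) (hπ : z.arg ≠ π) :
    z ∈ Complex.slitPlane := by
  rw [Complex.mem_slitPlane_iff]
  by_contra h
  push_neg at h
  obtain ⟨h1, h2⟩ := h
  rcases lt_or_eq_of_le h1 with h1 | h1
  · exact hπ (Complex.arg_eq_pi_iff.mpr ⟨h1, h2⟩)
  · have : z = 0 := by apply Complex.ext <;> simp [← h1, h2]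
    rw [this] at hz; simp at hz

lemma part1 : closure A ⊆ {p : ℂ × ℂ |
        ‖p.1‖ = 1 ∧ ‖p.2‖ = 1 ∧
        ¬(p.1.arg ≠ Real.pi ∧ p.2.arg ≠ Real.pi ∧
          |p.1.arg - p.2.arg| < Real.pi)} := by
  intro p hp
  have habs1 : ‖p.1‖ = 1 := by
    have hcl : IsClosed {q : ℂ × ℂ | ‖q.1‖ = 1} :=
      isClosed_eq (continuous_norm.comp continuous_fst) continuous_const
    exact closure_minimal (fun q hq => hq.1) hcl hp
  have habs2 : ‖p.2‖ = 1 := by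
    have hcl : IsClosed {q : ℂ × ℂ | ‖q.2‖ = 1} :=
      isClosed_eq (continuous_norm.comp continuous_snd) continuous_const
    exact closure_minimal (fun q hq => hq.2.1) hcl hp
  refine ⟨habs1, habs2, ?_⟩
  rintro ⟨h1, h2, h3⟩
  have hc1 : ContinuousAt (fun q : ℂ × ℂ => q.1.arg) p :=
    (Complex.continuousAt_arg (slit_of_unit habs1 h1)).comp continuousAt_fst
  have hc2 : ContinuousAt (fun q : ℂ × ℂ => q.2.arg) p :=
    (Complex.continuousAt_arg (slit_of_unit habs2 h2)).comp continuousAt_snd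
  have hF : ContinuousAt (fun q : ℂ × ℂ => ((q.1.arg, q.2.arg) : ℝ × ℝ)) p :=
    hc1.prodMk hc2
  set U : Set (ℝ × ℝ) := (Prod.fst ⁻¹' Set.Ioo (-π) π) ∩
      ((Prod.snd ⁻¹' Set.Ioo (-π) π) ∩
      ((fun x : ℝ × ℝ => |x.1 - x.2|) ⁻¹' Set.Iio π)) with hU
  have hUopen : IsOpen U :=
    (isOpen_Ioo.preimage continuous_fst).inter
      ((isOpen_Ioo.preimage continuous_snd).inter
        (isOpen_Iio.preimage (by fun_prop)))
  have hmemU : ((p.1.arg, p.2.arg) : ℝ × ℝ) ∈ U :=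
    ⟨⟨Complex.neg_pi_lt_arg _, lt_of_le_of_ne (Complex.arg_le_pi _) h1⟩,
     ⟨Complex.neg_pi_lt_arg _, lt_of_le_of_ne (Complex.arg_le_pi _) h2⟩, h3⟩
  have ht : (fun q : ℂ × ℂ => ((q.1.arg, q.2.arg) : ℝ × ℝ)) ⁻¹' U ∈ nhds p :=
    hF.preimage_mem_nhds (hUopen.mem_nhds hmemU)
  obtain ⟨q, hqt, hqA⟩ := mem_closure_iff_nhds.mp hp _ ht
  exact key hqt.1.2 hqt.2.1.2 hqt.2.2 hqA

lemma swapA {u v : ℂ} (h : (u, v) ∈ A) : (v, u) ∈ A := by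
  obtain ⟨h1, h2, r₁, r₂, hr₁, hr₂, heq⟩ := h
  exact ⟨h2, h1, r₂, r₁, hr₂, hr₁, by rw [← heq]; ring⟩

lemma memA' {a b : ℝ} (ha0 : a < 0) (haπ : -π < a) (hbπ : b < π) (hb0 : 0 < b)
    (hab : π < b - a) : (Complex.exp (a * I), Complex.exp (b * I)) ∈ A :=
  swapA (memA hb0 hbπ haπ ha0 hab)

lemma swap_closure {u v : ℂ} (h : (u, v) ∈ closure A) : (v, u) ∈ closure A := by
  have hsub : Prod.swap '' closure A ⊆ closure (Prod.swap '' A) :=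
    image_closure_subset_closure_image continuous_swap
  have h3 : ((v, u) : ℂ × ℂ) ∈ closure (Prod.swap '' A) := hsub ⟨(u, v), h, rfl⟩
  refine closure_mono ?_ h3
  rintro q ⟨⟨w₁, w₂⟩, hw, rfl⟩
  exact swapA hw

lemma closure_helper {u v : ℂ} (α β : ℝ) (hu : Complex.exp (α * I) = u)
    (hv : Complex.exp (β * I) = v) (a b : ℕ → ℝ)
    (ha : Filter.Tendsto a Filter.atTop (nhds α))
    (hb : Filter.Tendsto b Filter.atTop (nhds β))
    (hcond : ∀ᶠ n in Filter.atTop,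
      (Complex.exp (a n * I), Complex.exp (b n * I)) ∈ A) :
    (u, v) ∈ closure A := by
  apply mem_closure_of_tendsto (f := fun n => (Complex.exp (a n * I), Complex.exp (b n * I)))
    (b := Filter.atTop) ?_ hcond
  rw [← hu, ← hv]
  refine Filter.Tendsto.prodMk_nhds ?_ ?_ <;>
  · apply Filter.Tendsto.cexp
    apply Filter.Tendsto.mul_const
    exact (Complex.continuous_ofReal.tendsto _).comp (by assumption)

lemma exp_neg_pi : Complex.exp ((-π : ℝ) * I) = -1 := by
  rw [show ((-π : ℝ) : ℂ) * I = -(↑π * I) by push_cast; ring, Complex.exp_neg,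
    Complex.exp_pi_mul_I]
  norm_num

lemma eps_tendsto : Filter.Tendsto (fun n : ℕ => 1 / ((n : ℝ) + 1))
    Filter.atTop (nhds 0) := tendsto_one_div_add_atTop_nhds_zero_nat

lemma negOne_negOne : ((-1 : ℂ), (-1 : ℂ)) ∈ A :=
  ⟨by simp, by simp, 1/2, 1/2, by norm_num, by norm_num, by push_cast; ring⟩

lemma negOne_one : ((-1 : ℂ), (1 : ℂ)) ∈ A :=
  ⟨by simp, by simp, 2, 1, by norm_num, by norm_num, by push_cast; ring⟩

lemma case_pi_right {v : ℂ} (hv : ‖v‖ = 1) : ((-1 : ℂ), v) ∈ closure A := by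
  set θ₂ := v.arg with hθ₂
  have hev : Complex.exp ((θ₂ : ℝ) * I) = v := by
    have := Complex.norm_mul_exp_arg_mul_I v
    rwa [hv, Complex.ofReal_one, one_mul] at this
  have hl : -π < θ₂ := Complex.neg_pi_lt_arg v
  have hπ := Real.pi_pos
  rcases lt_trichotomy θ₂ 0 with h0 | h0 | h0
  · -- θ₂ ∈ (-π, 0) : a n = π - ε n
    refine closure_helper π θ₂ Complex.exp_pi_mul_I hev
      (fun n => π - 1 / ((n : ℝ) + 1)) (fun n => θ₂) ?_ tendsto_const_nhds ?_
    · simpa using tendsto_const_nhds.sub eps_tendsto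
    · filter_upwards [eps_tendsto.eventually (gt_mem_nhds hπ),
        eps_tendsto.eventually (gt_mem_nhds (by linarith : (0:ℝ) < -θ₂))] with n hn1 hn2
      have hε : (0:ℝ) < 1/((n:ℝ)+1) := by positivity
      exact memA (by linarith) (by linarith) hl h0 (by linarith)
  · -- θ₂ = 0 : v = 1
    have hv1 : v = 1 := by rw [← hev, h0]; simp
    rw [hv1]
    exact subset_closure negOne_one
  · rcases eq_or_lt_of_le (Complex.arg_le_pi v) with h1 | h1
    · -- θ₂ = π : v = -1
      have ht : θ₂ = π := h1
      have hv1 : v = -1 := by rw [← hev, ht]; exact Complex.exp_pi_mul_I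
      rw [hv1]
      exact subset_closure negOne_negOne
    · -- θ₂ ∈ (0, π) : a n = -π + ε n
      refine closure_helper (-π) θ₂ exp_neg_pi hev
        (fun n => -π + 1 / ((n : ℝ) + 1)) (fun n => θ₂) ?_ tendsto_const_nhds ?_
      · simpa using tendsto_const_nhds.add eps_tendsto
      · filter_upwards [eps_tendsto.eventually (gt_mem_nhds hπ),
          eps_tendsto.eventually (gt_mem_nhds h0)] with n hn1 hn2
        have hε : (0:ℝ) < 1/((n:ℝ)+1) := by positivity
        exact memA' (by linarith) (by linarith) h1 h0 (by linarith)

lemma case_gap {u v : ℂ} (hu : ‖u‖ = 1) (hv : ‖v‖ = 1)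
    (h1 : u.arg ≠ π) (h2 : v.arg ≠ π) (hd : π ≤ u.arg - v.arg) :
    (u, v) ∈ closure A := by
  set θ₁ := u.arg with hθ₁
  set θ₂ := v.arg with hθ₂
  have heu : Complex.exp ((θ₁ : ℝ) * I) = u := by
    have := Complex.norm_mul_exp_arg_mul_I u
    rwa [hu, Complex.ofReal_one, one_mul] at this
  have hev : Complex.exp ((θ₂ : ℝ) * I) = v := by
    have := Complex.norm_mul_exp_arg_mul_I v
    rwa [hv, Complex.ofReal_one, one_mul] at this
  have hl1 : -π < θ₁ := Complex.neg_pi_lt_arg u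
  have hl2 : -π < θ₂ := Complex.neg_pi_lt_arg v
  have hu1 : θ₁ < π := lt_of_le_of_ne (Complex.arg_le_pi u) h1
  have hu2 : θ₂ < π := lt_of_le_of_ne (Complex.arg_le_pi v) h2
  have hθ₁0 : 0 < θ₁ := by linarith
  have hθ₂0 : θ₂ < 0 := by linarith
  refine closure_helper θ₁ θ₂ heu hev (fun n => θ₁)
    (fun n => θ₂ - 1 / ((n : ℝ) + 1)) tendsto_const_nhds ?_ ?_
  · simpa using tendsto_const_nhds.sub eps_tendsto
  · filter_upwards [eps_tendsto.eventually (gt_mem_nhds (by linarith : (0:ℝ) < θ₂ + π))]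
      with n hn
    have hε : (0:ℝ) < 1/((n:ℝ)+1) := by positivity
    exact memA hθ₁0 hu1 (by linarith) (by linarith) (by linarith)

lemma part2 {p : ℂ × ℂ} (hu : ‖p.1‖ = 1) (hv : ‖p.2‖ = 1)
    (h : ¬(p.1.arg ≠ π ∧ p.2.arg ≠ π ∧ |p.1.arg - p.2.arg| < π)) :
    p ∈ closure A := by
  obtain ⟨u, v⟩ := p
  by_cases hπ1 : u.arg = π
  · have hu1 : u = -1 := by
      have h0 := Complex.norm_mul_exp_arg_mul_I u
      rw [hu, Complex.ofReal_one, one_mul, hπ1] at h0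
      rw [← h0]; exact Complex.exp_pi_mul_I
    show ((u, v) : ℂ × ℂ) ∈ closure A
    rw [hu1]
    exact case_pi_right hv
  by_cases hπ2 : v.arg = π
  · have hv1 : v = -1 := by
      have h0 := Complex.norm_mul_exp_arg_mul_I v
      rw [hv, Complex.ofReal_one, one_mul, hπ2] at h0
      rw [← h0]; exact Complex.exp_pi_mul_I
    show ((u, v) : ℂ × ℂ) ∈ closure A
    rw [hv1]
    exact swap_closure (case_pi_right hu)
  have hd : π ≤ |Complex.arg u - Complex.arg v| := by
    by_contra hc
    push_neg at hc
    exact h ⟨hπ1, hπ2, hc⟩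
  rcases le_abs.mp hd with h' | h'
  · exact case_gap hu hv hπ1 hπ2 h'
  · exact swap_closure (case_gap hv hu hπ2 hπ1 (by linarith))

end ZonotopeAux

/-- **The closed angle set of `{1 + x + y = 0} ⊆ (ℂ^×)²` is the complement of an
open zonotope.**  Identifying `(S¹)²` with the fundamental domain `(−π, π]²` via
arguments (`Complex.arg` takes values in `(−π, π]`), the closure of the image of
`X = {(x,y) ∈ (ℂ^×)² : 1 + x + y = 0}` under the coordinatewise angle map
`(x, y) ↦ (x/|x|, y/|y|)` is the complement in the square of the open zonotope
`{(θ₁, θ₂) : −π < θ₁ < π, −π < θ₂ < π, |θ₁ − θ₂| < π}`.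
A unit pair `(u, v)` lies in the angle set iff `1 + r₁·u + r₂·v = 0` for some
positive reals `r₁, r₂`; the condition `θᵢ ∈ (−π, π)` is `arg ≠ π`. -/
theorem closure_angleSet_line_eq_compl_zonotope :
    closure {p : ℂ × ℂ |
        ‖p.1‖ = 1 ∧ ‖p.2‖ = 1 ∧
        ∃ r₁ r₂ : ℝ, 0 < r₁ ∧ 0 < r₂ ∧
          1 + (r₁ : ℂ) * p.1 + (r₂ : ℂ) * p.2 = 0} =
    {p : ℂ × ℂ |
        ‖p.1‖ = 1 ∧ ‖p.2‖ = 1 ∧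
        ¬(p.1.arg ≠ Real.pi ∧ p.2.arg ≠ Real.pi ∧
          |p.1.arg - p.2.arg| < Real.pi)} := by
  apply Set.Subset.antisymm
  · exact ZonotopeAux.part1
  · rintro p ⟨h1, h2, h3⟩
    exact ZonotopeAux.part2 h1 h2 h3
end

section
/- Let n ≥ 1, let e₁, …, e_n be the standard basis of ℝⁿ and set e₀ := −(e₁ + ⋯ + e_n). Let Z be the Minkowski sum of the open segments (0, π·eⱼ) for j = 0, 1, …, n. Then Z equals the open zonotope {θ ∈ (−π, π)ⁿ : |θᵢ − θⱼ| < π for all 1 ≤ i < j ≤ n}. For n = 3 this polytope is the rhombic dodecahedron, which has 12 facets, 24 edges, and 14 vertices. -/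
noncomputable section

open scoped Real

open Set

/-- The Minkowski sum `Z` of the open segments `(0, π·eⱼ)`, `j = 0, 1, …, n`,
where `e₁, …, e_n` is the standard basis of `ℝⁿ` and `e₀ = −(e₁ + ⋯ + e_n)`. -/
def minkZ (n : ℕ) : Set (Fin n → ℝ) :=
  {x | ∃ t₀ : ℝ, ∃ t : Fin n → ℝ,
    t₀ ∈ Set.Ioo (0 : ℝ) π ∧ (∀ j, t j ∈ Set.Ioo (0 : ℝ) π) ∧
    x = (∑ j, t j • (Pi.single j (1 : ℝ) : Fin n → ℝ)) +
      t₀ • (-(∑ j, (Pi.single j (1 : ℝ) : Fin n → ℝ)))}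

lemma sum_eval {n : ℕ} (t : Fin n → ℝ) (t₀ : ℝ) :
    ((∑ j, t j • (Pi.single j (1 : ℝ) : Fin n → ℝ)) +
      t₀ • (-(∑ j, (Pi.single j (1 : ℝ) : Fin n → ℝ)))) = fun i => t i - t₀ := by
  have h1 : (∑ j, t j • (Pi.single j (1 : ℝ) : Fin n → ℝ)) = t := by
    have : ∀ j : Fin n, t j • (Pi.single j (1 : ℝ) : Fin n → ℝ) = Pi.single j (t j) := by
      intro j
      ext k
      by_cases h : k = j <;> simp [h, Pi.single_apply]
    rw [Finset.sum_congr rfl fun j _ => this j, Finset.univ_sum_single]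
  have h2 : (∑ j, (Pi.single j (1 : ℝ) : Fin n → ℝ)) = fun _ => 1 := by
    have := Finset.univ_sum_single (fun _ => (1:ℝ) : Fin n → ℝ)
    exact this
  rw [h1, h2]
  funext i
  simp [sub_eq_add_neg, mul_comm]

lemma minkZ_mem {n : ℕ} (x : Fin n → ℝ) :
    x ∈ minkZ n ↔ ∃ t₀ : ℝ, ∃ t : Fin n → ℝ,
      t₀ ∈ Set.Ioo (0 : ℝ) π ∧ (∀ j, t j ∈ Set.Ioo (0 : ℝ) π) ∧
      x = fun i => t i - t₀ := by
  unfold minkZ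
  simp only [mem_setOf_eq, sum_eval]

theorem part1 (n : ℕ) (hn : 1 ≤ n) : minkZ n =
    {θ : Fin n → ℝ | (∀ i, θ i ∈ Set.Ioo (-π) π) ∧
      ∀ i j : Fin n, i < j → |θ i - θ j| < π} := by
  ext θ
  rw [minkZ_mem]
  constructor
  · rintro ⟨t₀, t, ⟨h0, h0'⟩, ht, rfl⟩
    constructor
    · intro i
      have := ht i
      constructor <;> simp only [] <;> nlinarith [this.1, this.2]
    · intro i j _
      have hi := ht i; have hj := ht j
      rw [abs_lt]
      constructor <;> simp only [] <;> nlinarith [hi.1, hi.2, hj.1, hj.2]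
  · rintro ⟨h1, h2⟩
    have hne : (Finset.univ : Finset (Fin n)).Nonempty := by
      have : n ≠ 0 := by omega
      simpa [Finset.univ_nonempty_iff] using Fin.pos_iff_nonempty.mp (by omega)
    have habs : ∀ i j : Fin n, θ j - θ i < π := by
      intro i j
      rcases lt_trichotomy i j with h | h | h
      · have := h2 i j h; rw [abs_lt] at this; linarith [this.1]
      · subst h; linarith [Real.pi_pos]
      · have := h2 j i h; rw [abs_lt] at this; linarith [this.2]
    set a : ℝ := max (Finset.univ.sup' hne fun i => -θ i) 0 with ha
    set b : ℝ := min (Finset.univ.inf' hne fun i => π - θ i) π with hb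
    have hab : a < b := by
      rw [ha, hb]
      apply max_lt
      · rw [Finset.sup'_lt_iff]
        intro i _
        apply lt_min
        · rw [Finset.lt_inf'_iff]
          intro j _
          have := habs i j
          linarith
        · linarith [(h1 i).1]
      · apply lt_min
        · rw [Finset.lt_inf'_iff]
          intro j _
          linarith [(h1 j).2]
        · exact Real.pi_pos
    have ha0 : 0 ≤ a := le_max_right _ _
    have hbpi : b ≤ π := min_le_right _ _
    set t₀ : ℝ := (a + b) / 2 with ht₀
    have h₀a : a < t₀ := by rw [ht₀]; linarith
    have h₀b : t₀ < b := by rw [ht₀]; linarith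
    refine ⟨t₀, fun i => θ i + t₀, ⟨by linarith, by linarith⟩, ?_, by funext i; ring⟩
    intro j
    constructor
    · show (0:ℝ) < θ j + t₀
      have : -θ j ≤ a := le_trans (Finset.le_sup' (fun i => -θ i) (Finset.mem_univ j)) (le_max_left _ _)
      linarith
    · show θ j + t₀ < π
      have : b ≤ π - θ j := le_trans (min_le_left _ _) (Finset.inf'_le _ (Finset.mem_univ j))
      linarith

namespace RhDo

/-- the projection `ℝ⁴ → ℝ³`, `s ↦ (sᵢ₊₁ - s₀)ᵢ`. -/
def ψ : (Fin 4 → ℝ) →ₗ[ℝ] (Fin 3 → ℝ) where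
  toFun s := fun i => s i.succ - s 0
  map_add' s t := by funext i; simp; ring
  map_smul' c s := by funext i; simp; ring

lemma ψ_apply (s : Fin 4 → ℝ) (i : Fin 3) : ψ s i = s i.succ - s 0 := rfl

/-- closed cube -/
def C : Set (Fin 4 → ℝ) := univ.pi fun _ => Icc (0:ℝ) π

/-- open cube -/
def Co : Set (Fin 4 → ℝ) := univ.pi fun _ => Ioo (0:ℝ) π

lemma minkZ3_eq : minkZ 3 = ψ '' Co := by
  ext x
  rw [minkZ_mem]
  constructor
  · rintro ⟨t₀, t, h0, ht, rfl⟩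
    refine ⟨Fin.cons t₀ t, ?_, ?_⟩
    · intro k _
      refine Fin.cases ?_ ?_ k
      · simpa using h0
      · intro i; simpa using ht i
    · funext i; simp [ψ_apply]
  · rintro ⟨s, hs, rfl⟩
    refine ⟨s 0, fun i => s i.succ, hs 0 (mem_univ _), fun i => hs i.succ (mem_univ _), ?_⟩
    funext i; simp [ψ_apply]

lemma ψ_continuous : Continuous ψ := ψ.continuous_of_finiteDimensional

lemma closure_minkZ3 : closure (minkZ 3) = ψ '' C := by
  rw [minkZ3_eq]
  apply le_antisymm
  · apply closure_minimal
    · exact image_mono fun s hs k hk => ⟨le_of_lt (hs k hk).1, le_of_lt (hs k hk).2⟩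
    · exact ((isCompact_univ_pi fun _ => isCompact_Icc).image ψ_continuous).isClosed
  · have hC : C = closure Co := by
      rw [C, Co, closure_pi_set]
      exact Set.pi_congr rfl fun k _ => (closure_Ioo Real.pi_ne_zero.symm).symm
    rw [hC]
    exact (image_closure_subset_closure_image ψ_continuous)

/-- the face of `[0,π]` selected by a sign -/
def A : SignType → Set ℝ
  | .pos => {π}
  | .neg => {(0:ℝ)}
  | .zero => Icc 0 π

lemma A_subset (σ : SignType) : A σ ⊆ Icc 0 π := by
  cases σ <;> simp [A, singleton_subset_iff, le_of_lt Real.pi_pos, le_refl, Real.pi_pos.le]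

/-- box of the cube selected by a sign vector -/
def B (σ : Fin 4 → SignType) : Set (Fin 4 → ℝ) := univ.pi fun k => A (σ k)

lemma B_subset_C (σ : Fin 4 → SignType) : B σ ⊆ C :=
  fun s hs k hk => A_subset (σ k) (hs k hk)

/-- canonical point of a box -/
def pt (σ : Fin 4 → SignType) : Fin 4 → ℝ := fun k => if σ k = 1 then π else 0

lemma pt_mem_B (σ : Fin 4 → SignType) : pt σ ∈ B σ := by
  intro k _
  show pt σ k ∈ A (σ k)
  unfold pt
  cases h : σ k with
  | zero => simp [h, A, Real.pi_pos.le]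
  | neg => simp [h, A]
  | pos => simp [h, A]

/-- key: argmax of a linear functional over the cube is the box of its sign vector -/
lemma argmax_cube (c : Fin 4 → ℝ) :
    {s ∈ C | ∀ u ∈ C, (∑ k, c k * u k) ≤ ∑ k, c k * s k} =
      B fun k => SignType.sign (c k) := by
  have key : ∀ s ∈ C, ∀ k, c k * s k ≤ c k * pt (fun k => SignType.sign (c k)) k := by
    intro s hs k
    have h1 := (hs k (mem_univ k)).1
    have h2 := (hs k (mem_univ k)).2
    unfold pt
    rcases lt_trichotomy (c k) 0 with h | h | h
    · simp [sign_neg h]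
      nlinarith
    · simp [h]
    · simp [sign_pos h]
      nlinarith
  have hptC : pt (fun k => SignType.sign (c k)) ∈ C :=
    B_subset_C _ (pt_mem_B _)
  ext s
  constructor
  · rintro ⟨hsC, hmax⟩
    have hle := hmax _ hptC
    -- each term is at its max
    have heq : ∀ k ∈ Finset.univ, c k * s k = c k * pt (fun k => SignType.sign (c k)) k := by
      rw [← Finset.sum_eq_sum_iff_of_le (fun k _ => key s hsC k)]
      exact le_antisymm (Finset.sum_le_sum fun k _ => key s hsC k) hle
    intro k _
    show s k ∈ A (SignType.sign (c k))
    have h1 := (hsC k (mem_univ k)).1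
    have h2 := (hsC k (mem_univ k)).2
    have hk := heq k (Finset.mem_univ k)
    simp only [pt] at hk
    rcases lt_trichotomy (c k) 0 with h | h | h
    · simp only [sign_neg h] at hk ⊢
      rw [if_neg (by decide : ¬((-1 : SignType) = 1))] at hk
      have : s k = 0 := mul_left_cancel₀ (ne_of_lt h) (by linarith)
      show s k ∈ A (-1)
      rw [show A (-1) = {(0:ℝ)} from rfl]
      simp [this]
    · rw [h, sign_zero]
      exact ⟨h1, h2⟩
    · simp only [sign_pos h] at hk ⊢
      rw [if_pos trivial] at hk
      have : s k = π := mul_left_cancel₀ (ne_of_gt h) hk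
      show s k ∈ A 1
      rw [show A 1 = {π} from rfl]
      simp [this]
  · intro hsB
    have hsC : s ∈ C := B_subset_C _ hsB
    refine ⟨hsC, fun u hu => ?_⟩
    have hsval : ∀ k, c k * s k = c k * pt (fun k => SignType.sign (c k)) k := by
      intro k
      have hk := hsB k (mem_univ k)
      unfold pt
      rcases lt_trichotomy (c k) 0 with h | h | h
      · simp only [sign_neg h] at hk
        simp only [A] at hk
        simp only [sign_neg h]
        rw [show s k = 0 from hk]
        simp
      · simp [h]
      · simp only [sign_pos h] at hk
        simp only [A] at hk
        simp only [sign_pos h]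
        rw [show s k = π from hk]
        simp
    calc ∑ k, c k * u k ≤ ∑ k, c k * pt (fun k => SignType.sign (c k)) k :=
          Finset.sum_le_sum fun k _ => key u hu k
      _ = ∑ k, c k * s k := by
          exact Finset.sum_congr rfl fun k _ => (hsval k).symm

/-- the face of the zonotope attached to a sign vector -/
def Φ (σ : Fin 4 → SignType) : Set (Fin 3 → ℝ) := ψ '' B σ

lemma face_image (l : (Fin 3 → ℝ) →L[ℝ] ℝ) :
    {x ∈ ψ '' C | ∀ y ∈ ψ '' C, l y ≤ l x} =
      ψ '' {s ∈ C | ∀ u ∈ C, l (ψ u) ≤ l (ψ s)} := by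
  ext x
  constructor
  · rintro ⟨⟨s, hs, rfl⟩, hmax⟩
    exact ⟨s, ⟨hs, fun u hu => hmax _ (mem_image_of_mem _ hu)⟩, rfl⟩
  · rintro ⟨s, ⟨hs, hmax⟩, rfl⟩
    refine ⟨mem_image_of_mem _ hs, ?_⟩
    rintro y ⟨u, hu, rfl⟩
    exact hmax u hu

lemma lin_expand (l : (Fin 3 → ℝ) →L[ℝ] ℝ) (s : Fin 4 → ℝ) :
    l (ψ s) = ∑ k, (l (ψ (Pi.single k 1))) * s k := by
  have hs : s = ∑ k, s k • (Pi.single k (1:ℝ) : Fin 4 → ℝ) := by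
    have : ∀ k : Fin 4, s k • (Pi.single k (1 : ℝ) : Fin 4 → ℝ) = Pi.single k (s k) := by
      intro k; ext m
      by_cases h : m = k <;> simp [h, Pi.single_apply]
    rw [Finset.sum_congr rfl fun k _ => this k, Finset.univ_sum_single]
  conv_lhs => rw [hs]
  rw [map_sum, map_sum]
  congr 1
  funext k
  rw [map_smul, map_smul]
  simp [mul_comm]

lemma sum_coeff_zero (l : (Fin 3 → ℝ) →L[ℝ] ℝ) :
    ∑ k, l (ψ (Pi.single k 1)) = 0 := by
  have h1 : (∑ k, (Pi.single k (1:ℝ) : Fin 4 → ℝ)) = fun _ => 1 :=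
    Finset.univ_sum_single (fun _ => (1:ℝ) : Fin 4 → ℝ)
  have h2 : ψ (fun _ => (1:ℝ)) = 0 := by
    funext i; simp [ψ_apply]
  calc ∑ k, l (ψ (Pi.single k 1)) = l (ψ (∑ k, Pi.single k 1)) := by rw [map_sum, map_sum]
    _ = 0 := by rw [h1, h2, map_zero]

/-- a sign vector is achievable iff it is zero or has both signs -/
def Ach (σ : Fin 4 → SignType) : Prop :=
  σ = 0 ∨ ((∃ k, σ k = 1) ∧ (∃ k, σ k = -1))

lemma ach_of_coeff (c : Fin 4 → ℝ) (hc : ∑ k, c k = 0) :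
    Ach fun k => SignType.sign (c k) := by
  by_cases h : ∀ k, c k = 0
  · left; funext k; simp [h k]
  · right
    push_neg at h
    obtain ⟨k₀, hk₀⟩ := h
    constructor
    · by_contra hpos
      push_neg at hpos
      have hnp : ∀ k, c k ≤ 0 := by
        intro k
        by_contra hgt
        push_neg at hgt
        exact hpos k (sign_pos hgt)
      have := (Finset.sum_eq_zero_iff_of_nonpos (fun k _ => hnp k)).1 hc k₀ (Finset.mem_univ k₀)
      exact hk₀ this
    · by_contra hneg
      push_neg at hneg
      have hnn : ∀ k, 0 ≤ c k := by
        intro k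
        by_contra hlt
        push_neg at hlt
        exact hneg k (sign_neg hlt)
      have := (Finset.sum_eq_zero_iff_of_nonneg (fun k _ => hnn k)).1 hc k₀ (Finset.mem_univ k₀)
      exact hk₀ this

/-- conversely, an achievable sign vector comes from coefficients summing to zero -/
lemma coeff_of_ach {σ : Fin 4 → SignType} (h : Ach σ) :
    ∃ c : Fin 4 → ℝ, (∀ k, SignType.sign (c k) = σ k) ∧ ∑ k, c k = 0 := by
  rcases h with h | ⟨⟨kp, hkp⟩, ⟨km, hkm⟩⟩
  · exact ⟨0, fun k => by simp [h], by simp⟩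
  · set P : Finset (Fin 4) := Finset.univ.filter (fun k => σ k = 1) with hP
    set M : Finset (Fin 4) := Finset.univ.filter (fun k => σ k = -1) with hM
    have hPpos : 0 < (P.card : ℝ) := by
      have : kp ∈ P := by simp [hP, hkp]
      exact_mod_cast Nat.pos_of_ne_zero (fun hz => by simp [Finset.card_eq_zero] at hz; simp [hz] at this)
    have hMpos : 0 < (M.card : ℝ) := by
      have : km ∈ M := by simp [hM, hkm]
      exact_mod_cast Nat.pos_of_ne_zero (fun hz => by simp [Finset.card_eq_zero] at hz; simp [hz] at this)
    refine ⟨fun k => if σ k = 1 then (M.card : ℝ) else if σ k = -1 then -(P.card : ℝ) else 0,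
      ?_, ?_⟩
    · intro k
      show SignType.sign (if σ k = 1 then (M.card : ℝ) else if σ k = -1 then -(P.card : ℝ) else 0) = σ k
      rcases hσ : σ k with _ | _ | _
      · rw [if_neg (by decide), if_neg (by decide), sign_zero]; decide
      · rw [if_neg (by decide), if_pos (by decide)]
        rw [sign_neg (by linarith)]; decide
      · rw [if_pos (by decide)]
        rw [sign_pos hMpos]; decide
    · have hpt : ∀ k, (if σ k = 1 then (M.card : ℝ) else if σ k = -1 then -(P.card : ℝ) else 0) =
          (if σ k = 1 then (M.card : ℝ) else 0) + (if σ k = -1 then -(P.card : ℝ) else 0) := by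
        intro k
        rcases hσ : σ k with _ | _ | _ <;> split_ifs <;> simp_all
      calc (∑ k, if σ k = 1 then (M.card : ℝ) else if σ k = -1 then -(P.card : ℝ) else 0)
          = (∑ k, if σ k = 1 then (M.card : ℝ) else 0) +
            (∑ k, if σ k = -1 then -(P.card : ℝ) else 0) := by
            rw [← Finset.sum_add_distrib]
            exact Finset.sum_congr rfl fun k _ => hpt k
        _ = 0 := by
            rw [← Finset.sum_filter, ← Finset.sum_filter, Finset.sum_const, Finset.sum_const,
              ← hP, ← hM]
            simp [nsmul_eq_mul]
            ring

/-- the continuous linear functional on `ℝ³` attached to coefficients `c` -/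
def lfun (c : Fin 4 → ℝ) : (Fin 3 → ℝ) →L[ℝ] ℝ :=
  LinearMap.toContinuousLinearMap (∑ i : Fin 3, c i.succ • LinearMap.proj i)

lemma lfun_apply (c : Fin 4 → ℝ) (x : Fin 3 → ℝ) :
    lfun c x = ∑ i, c i.succ * x i := by
  simp [lfun, LinearMap.sum_apply, LinearMap.proj_apply, smul_eq_mul]

lemma lfun_psi (c : Fin 4 → ℝ) (hc : ∑ k, c k = 0) (s : Fin 4 → ℝ) :
    lfun c (ψ s) = ∑ k, c k * s k := by
  rw [lfun_apply]
  have hsum : ∑ i : Fin 3, c i.succ = -c 0 := by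
    rw [Fin.sum_univ_succ] at hc
    linarith
  have : ∀ i : Fin 3, c i.succ * ψ s i = c i.succ * s i.succ - c i.succ * s 0 := by
    intro i; rw [ψ_apply]; ring
  rw [Finset.sum_congr rfl fun i _ => this i, Finset.sum_sub_distrib, ← Finset.sum_mul, hsum]
  rw [show (∑ k : Fin 4, c k * s k) = c 0 * s 0 + ∑ i : Fin 3, c i.succ * s i.succ from
    Fin.sum_univ_succ _]
  ring

lemma argmax_lfun (c : Fin 4 → ℝ) (hc : ∑ k, c k = 0) :
    {s ∈ C | ∀ u ∈ C, lfun c (ψ u) ≤ lfun c (ψ s)} = B fun k => SignType.sign (c k) := by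
  rw [← argmax_cube c]
  ext s
  simp only [mem_setOf_eq, lfun_psi c hc]

lemma Φ_nonempty (σ : Fin 4 → SignType) : (Φ σ).Nonempty :=
  ⟨ψ (pt σ), mem_image_of_mem _ (pt_mem_B σ)⟩

lemma isExposed_Φ {σ : Fin 4 → SignType} (h : Ach σ) : IsExposed ℝ (ψ '' C) (Φ σ) := by
  intro _
  obtain ⟨c, hsign, hc⟩ := coeff_of_ach h
  refine ⟨lfun c, ?_⟩
  rw [face_image, argmax_lfun c hc, show (fun k => SignType.sign (c k)) = σ from funext hsign]
  rfl

lemma face_eq_general (l : (Fin 3 → ℝ) →L[ℝ] ℝ) :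
    {s ∈ C | ∀ u ∈ C, l (ψ u) ≤ l (ψ s)} =
      B (fun k => SignType.sign (l (ψ (Pi.single k 1)))) := by
  rw [← argmax_cube (fun k => l (ψ (Pi.single k 1)))]
  ext s
  constructor
  · rintro ⟨h1, h2⟩
    refine ⟨h1, fun u hu => ?_⟩
    have h3 := h2 u hu
    rw [lin_expand l u, lin_expand l s] at h3
    exact h3
  · rintro ⟨h1, h2⟩
    refine ⟨h1, fun u hu => ?_⟩
    have h3 := h2 u hu
    rw [lin_expand l u, lin_expand l s]
    exact h3

lemma exposed_eq_Φ {F : Set (Fin 3 → ℝ)} (hne : F.Nonempty)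
    (hexp : IsExposed ℝ (ψ '' C) F) : ∃ σ, Ach σ ∧ F = Φ σ := by
  obtain ⟨l, hl⟩ := hexp hne
  refine ⟨fun k => SignType.sign (l (ψ (Pi.single k 1))),
    ach_of_coeff _ (sum_coeff_zero l), ?_⟩
  rw [hl, face_image, face_eq_general l]
  rfl

lemma B_saturated {σ : Fin 4 → SignType} (h : Ach σ) {s : Fin 4 → ℝ}
    (hs : s ∈ C) (hψ : ψ s ∈ Φ σ) : s ∈ B σ := by
  obtain ⟨c, hsign, hc⟩ := coeff_of_ach h
  have hB : B σ = {s ∈ C | ∀ u ∈ C, (∑ k, c k * u k) ≤ ∑ k, c k * s k} := by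
    rw [argmax_cube c, show (fun k => SignType.sign (c k)) = σ from funext hsign]
  obtain ⟨s', hs', heq⟩ := hψ
  rw [hB] at hs' ⊢
  obtain ⟨hs'C, hmax⟩ := hs'
  have hshift : ∀ k, s k = s' k + (s 0 - s' 0) := by
    intro k
    refine Fin.cases (by ring) (fun i => ?_) k
    have := congrFun heq i
    rw [ψ_apply, ψ_apply] at this
    linarith
  have hval : ∑ k, c k * s k = ∑ k, c k * s' k := by
    calc ∑ k, c k * s k = ∑ k, (c k * s' k + (s 0 - s' 0) * c k) := by
          refine Finset.sum_congr rfl fun k _ => ?_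
          rw [hshift k]; ring
      _ = ∑ k, c k * s' k + (s 0 - s' 0) * ∑ k, c k := by
          rw [Finset.sum_add_distrib, Finset.mul_sum]
      _ = ∑ k, c k * s' k := by rw [hc]; ring
  exact ⟨hs, fun u hu => (hmax u hu).trans_eq hval.symm⟩

/-- test point of a box, in its relative interior -/
def mid (σ : Fin 4 → SignType) : Fin 4 → ℝ := fun k =>
  match σ k with
  | .pos => π
  | .neg => 0
  | .zero => π/2

lemma mid_mem_B (σ : Fin 4 → SignType) : mid σ ∈ B σ := by
  intro k _
  show mid σ k ∈ A (σ k)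
  unfold mid
  rcases h : σ k with _ | _ | _ <;> simp [h, A] <;>
    constructor <;> linarith [Real.pi_pos]

lemma phi_inj {σ τ : Fin 4 → SignType} (hσ : Ach σ) (hτ : Ach τ) (h : Φ σ = Φ τ) :
    σ = τ := by
  have hστ : mid σ ∈ B τ := by
    apply B_saturated hτ (B_subset_C σ (mid_mem_B σ))
    rw [← h]
    exact mem_image_of_mem _ (mid_mem_B σ)
  have hτσ : mid τ ∈ B σ := by
    apply B_saturated hσ (B_subset_C τ (mid_mem_B τ))
    rw [h]
    exact mem_image_of_mem _ (mid_mem_B τ)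
  funext k
  have h1 : mid σ k ∈ A (τ k) := hστ k (mem_univ k)
  have h2 : mid τ k ∈ A (σ k) := hτσ k (mem_univ k)
  have pi_pos := Real.pi_pos
  unfold mid at h1 h2
  rcases e1 : σ k with _ | _ | _ <;> rcases e2 : τ k with _ | _ | _ <;>
    rw [e1] at h1 h2 <;> rw [e2] at h1 h2 <;>
    simp only [A, mem_singleton_iff, mem_Icc] at h1 h2 <;>
    first
    | rfl
    | (exfalso; linarith)

/-- images of the generators -/
def w (k : Fin 4) : Fin 3 → ℝ := ψ (Pi.single k 1)

lemma w_zero : w 0 = fun _ => -1 := by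
  funext i
  simp [w, ψ_apply, Pi.single_apply, (Fin.succ_ne_zero i)]

lemma w_succ (j : Fin 3) : w j.succ = Pi.single j 1 := by
  funext i
  simp only [w, ψ_apply, Pi.single_apply, Fin.succ_inj, (Fin.succ_ne_zero j).symm]
  by_cases h : i = j <;> simp [h, (Fin.succ_ne_zero j).symm]

lemma w_ne_zero (k : Fin 4) : w k ≠ 0 := by
  refine Fin.cases ?_ (fun j => ?_) k
  · intro h
    have := congrFun h 0
    rw [w_zero] at this
    norm_num at this
  · intro h
    have := congrFun h j
    rw [w_succ] at this
    simp at this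

lemma A_const {σ : SignType} (h : ¬σ = 0) {a b : ℝ} (ha : a ∈ A σ) (hb : b ∈ A σ) :
    a = b := by
  cases σ with
  | zero => exact absurd rfl h
  | neg =>
    rw [show A SignType.neg = {(0:ℝ)} from rfl, mem_singleton_iff] at ha hb
    rw [ha, hb]
  | pos =>
    rw [show A SignType.pos = {π} from rfl, mem_singleton_iff] at ha hb
    rw [ha, hb]

lemma vectorSpan_B (σ : Fin 4 → SignType) :
    vectorSpan ℝ (B σ) =
      Submodule.span ℝ ((fun k => (Pi.single k 1 : Fin 4 → ℝ)) '' {k | σ k = 0}) := by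
  rw [vectorSpan_def]
  apply le_antisymm
  · rw [Submodule.span_le]
    rintro d ⟨s, hs, s', hs', rfl⟩
    show s - s' ∈ (Submodule.span ℝ ((fun k => (Pi.single k 1 : Fin 4 → ℝ)) '' {k | σ k = 0}) : Set _)
    have hd : s - s' = ∑ k, (Pi.single k ((s - s') k) : Fin 4 → ℝ) :=
      (Finset.univ_sum_single (s - s')).symm
    rw [SetLike.mem_coe, hd]
    apply Submodule.sum_mem
    intro k _
    by_cases h : σ k = 0
    · have : (Pi.single k ((s - s') k) : Fin 4 → ℝ) = ((s - s') k) • (Pi.single k 1 : Fin 4 → ℝ) := by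
        ext m
        by_cases hm : m = k <;> simp [hm, Pi.single_apply]
      rw [this]
      exact Submodule.smul_mem _ _ (Submodule.subset_span (mem_image_of_mem _ h))
    · have : (s - s') k = 0 := by
        have := A_const h (hs k (mem_univ k)) (hs' k (mem_univ k))
        simp [this]
      rw [this, Pi.single_zero]
      exact Submodule.zero_mem _
  · rw [Submodule.span_le]
    rintro x ⟨k, hk, rfl⟩
    have hpt : pt σ ∈ B σ := pt_mem_B σ
    have hptk : pt σ k = 0 := by
      unfold pt
      rw [if_neg]
      intro h1
      rw [mem_setOf_eq, h1] at hk
      exact absurd hk (by decide)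
    have hupd : Function.update (pt σ) k π ∈ B σ := by
      intro m _
      show Function.update (pt σ) k π m ∈ A (σ m)
      by_cases hm : m = k
      · subst hm
        rw [Function.update_self, mem_setOf_eq.mp hk]
        exact ⟨Real.pi_pos.le, le_refl _⟩
      · rw [Function.update_of_ne hm]
        exact hpt m (mem_univ m)
    have hdiff : Function.update (pt σ) k π - pt σ = (Pi.single k π : Fin 4 → ℝ) := by
      funext m
      simp only [Pi.sub_apply]
      by_cases hm : m = k
      · subst hm
        rw [Function.update_self, hptk, Pi.single_eq_same]
        ring
      · rw [Function.update_of_ne hm, Pi.single_eq_of_ne hm]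
        ring
    have hmem : (Pi.single k π : Fin 4 → ℝ) ∈ Submodule.span ℝ ((B σ) -ᵥ (B σ)) := by
      apply Submodule.subset_span
      rw [← hdiff]
      exact Set.sub_mem_sub hupd hpt
    have : (Pi.single k 1 : Fin 4 → ℝ) = π⁻¹ • (Pi.single k π : Fin 4 → ℝ) := by
      ext m
      by_cases hm : m = k <;>
        simp [hm, Pi.single_apply, inv_mul_cancel₀ Real.pi_ne_zero]
    show (Pi.single k 1 : Fin 4 → ℝ) ∈ (Submodule.span ℝ ((B σ) -ᵥ (B σ)) : Set _)
    rw [SetLike.mem_coe, this]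
    exact Submodule.smul_mem _ _ hmem

lemma direction_Φ (σ : Fin 4 → SignType) :
    (affineSpan ℝ (Φ σ)).direction = Submodule.span ℝ (w '' {k | σ k = 0}) := by
  rw [direction_affineSpan]
  unfold Φ
  have himg : ψ '' B σ = ψ.toAffineMap '' B σ := rfl
  rw [himg, ← AffineMap.vectorSpan_image_eq_submodule_map, vectorSpan_B,
    Submodule.map_span]
  congr 1
  rw [← Set.image_comp]
  rfl

lemma smul_w_ne {j k : Fin 4} (h : j ≠ k) (a : ℝ) : a • w k ≠ w j := by
  intro heq
  rcases Fin.eq_zero_or_eq_succ j with rfl | ⟨m, rfl⟩ <;>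
    rcases Fin.eq_zero_or_eq_succ k with rfl | ⟨m', rfl⟩
  · exact h rfl
  · obtain ⟨i, hi⟩ := exists_ne m'
    have := congrFun heq i
    simp [w_succ, w_zero, Pi.single_eq_of_ne hi] at this
  · obtain ⟨i, hi⟩ := exists_ne m
    have h1 := congrFun heq m
    have h2 := congrFun heq i
    simp [w_succ, w_zero, Pi.single_eq_same, Pi.single_eq_of_ne hi] at h1 h2
    rw [h2] at h1
    norm_num at h1
  · have hmm : m ≠ m' := fun e => h (by rw [e])
    have := congrFun heq m
    simp [w_succ, Pi.single_eq_same, Pi.single_eq_of_ne hmm,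
      Pi.single_eq_of_ne (Ne.symm hmm)] at this

lemma indep_w {j k : Fin 4} (h : j ≠ k) : LinearIndependent ℝ ![w j, w k] := by
  rw [linearIndependent_fin2]
  refine ⟨?_, fun a => ?_⟩
  · simpa using w_ne_zero k
  · simpa using smul_w_ne h a

lemma finrank_span_pair {a b : Fin 3 → ℝ} (h : LinearIndependent ℝ ![a, b]) :
    Module.finrank ℝ (Submodule.span ℝ ({a, b} : Set (Fin 3 → ℝ))) = 2 := by
  have hr : Set.range ![a, b] = {a, b} := by
    ext x
    simp [Fin.exists_fin_two]
    tauto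
  rw [← hr, finrank_span_eq_card h, Fintype.card_fin]

/-- number of zero signs -/
def zcount (σ : Fin 4 → SignType) : ℕ := (Finset.univ.filter fun k => σ k = 0).card

lemma zset_eq (σ : Fin 4 → SignType) :
    {k | σ k = 0} = ↑(Finset.univ.filter fun k => σ k = 0) := by
  ext k; simp

lemma zcount_le_two {σ : Fin 4 → SignType} (hach : Ach σ) (h0 : σ ≠ 0) :
    zcount σ ≤ 2 := by
  rcases hach with rfl | ⟨⟨kp, hkp⟩, ⟨km, hkm⟩⟩
  · exact absurd rfl h0
  · have hne : kp ≠ km := by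
      intro e
      rw [e, hkm] at hkp
      exact absurd hkp (by decide)
    have hsub : (Finset.univ.filter fun k => σ k = 0) ⊆ Finset.univ \ {kp, km} := by
      intro k hk
      rw [Finset.mem_filter] at hk
      rw [Finset.mem_sdiff]
      refine ⟨Finset.mem_univ k, ?_⟩
      intro hmem
      rcases Finset.mem_insert.1 hmem with rfl | hmem'
      · rw [hkp] at hk; exact absurd hk.2 (by decide)
      · rw [Finset.mem_singleton.1 hmem', hkm] at hk; exact absurd hk.2 (by decide)
    calc zcount σ ≤ (Finset.univ \ {kp, km}).card := Finset.card_le_card hsub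
      _ = 4 - 2 := by
          rw [Finset.card_sdiff_of_subset (Finset.subset_univ _), Finset.card_insert_of_notMem
            (by simpa using hne), Finset.card_singleton]
          simp
      _ = 2 := rfl

lemma finrank_dir {σ : Fin 4 → SignType} (hach : Ach σ) (h0 : σ ≠ 0) :
    Module.finrank ℝ (affineSpan ℝ (Φ σ)).direction = zcount σ := by
  rw [direction_Φ, zset_eq]
  have hle := zcount_le_two hach h0
  rcases hc : zcount σ with _ | _ | _ | n
  · rw [Finset.card_eq_zero.1 hc]
    simp
  · obtain ⟨k, hk⟩ := Finset.card_eq_one.1 hc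
    rw [hk]
    have himg : (w '' ↑({k} : Finset (Fin 4))) = {w k} := by simp
    rw [himg]
    exact finrank_span_singleton (w_ne_zero k)
  · obtain ⟨j, k, hjk, hk⟩ := Finset.card_eq_two.1 hc
    rw [hk]
    have himg : (w '' ↑({j, k} : Finset (Fin 4))) = {w j, w k} := by
      simp [Set.image_insert_eq]
    rw [himg]
    exact finrank_span_pair (indep_w hjk)
  · omega

lemma finrank_dir_zero :
    Module.finrank ℝ (affineSpan ℝ (Φ 0)).direction = 3 := by
  rw [direction_Φ]
  have hZ : {k : Fin 4 | (0 : Fin 4 → SignType) k = 0} = univ := by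
    ext k; simp [Pi.zero_apply]
  rw [hZ]
  have htop : Submodule.span ℝ (w '' univ) = ⊤ := by
    rw [Submodule.eq_top_iff']
    intro x
    have hx : x = ∑ i : Fin 3, x i • w i.succ := by
      simp only [w_succ]
      have : ∀ i : Fin 3, x i • (Pi.single i (1:ℝ) : Fin 3 → ℝ) = Pi.single i (x i) := by
        intro i; ext m
        by_cases h : m = i <;> simp [h, Pi.single_apply]
      rw [Finset.sum_congr rfl fun i _ => this i, Finset.univ_sum_single]
    rw [hx]
    exact Submodule.sum_mem _ fun i _ => Submodule.smul_mem _ _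
      (Submodule.subset_span ⟨i.succ, mem_univ _, rfl⟩)
  rw [htop, finrank_top]
  simp [Module.finrank_fin_fun]

lemma zcount_zero : zcount (0 : Fin 4 → SignType) = 4 := by decide

instance achDecidable : DecidablePred Ach := fun σ =>
  decidable_of_iff (σ = 0 ∨ ((∃ k, σ k = 1) ∧ (∃ k, σ k = -1))) Iff.rfl

lemma card_faces (m : ℕ) (hm : m ≤ 2) :
    Nat.card {F : Set (Fin 3 → ℝ) // F.Nonempty ∧ IsExposed ℝ (ψ '' C) F ∧
      Module.finrank ℝ (affineSpan ℝ F).direction = m} =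
    Nat.card {σ : Fin 4 → SignType // Ach σ ∧ zcount σ = m} := by
  symm
  apply Nat.card_eq_of_bijective
    (f := fun σs => ⟨Φ σs.1, Φ_nonempty σs.1, isExposed_Φ σs.2.1, by
      have h0 : σs.1 ≠ 0 := by
        intro e
        have := σs.2.2
        rw [e, zcount_zero] at this
        omega
      rw [finrank_dir σs.2.1 h0]
      exact σs.2.2⟩)
  constructor
  · rintro ⟨σ, hσ⟩ ⟨τ, hτ⟩ hst
    have : Φ σ = Φ τ := congrArg Subtype.val hst
    exact Subtype.ext (phi_inj hσ.1 hτ.1 this)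
  · rintro ⟨F, hne, hexp, hdim⟩
    obtain ⟨σ, hach, rfl⟩ := exposed_eq_Φ hne hexp
    have h0 : σ ≠ 0 := by
      intro e
      rw [e, finrank_dir_zero] at hdim
      omega
    have hz : zcount σ = m := by
      rw [← finrank_dir hach h0]
      exact hdim
    exact ⟨⟨σ, hach, hz⟩, rfl⟩

lemma card_sig_two : Nat.card {σ : Fin 4 → SignType // Ach σ ∧ zcount σ = 2} = 12 := by
  rw [Nat.card_eq_fintype_card]
  decide

lemma card_sig_one : Nat.card {σ : Fin 4 → SignType // Ach σ ∧ zcount σ = 1} = 24 := by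
  rw [Nat.card_eq_fintype_card]
  decide

lemma card_sig_zero : Nat.card {σ : Fin 4 → SignType // Ach σ ∧ zcount σ = 0} = 14 := by
  rw [Nat.card_eq_fintype_card]
  decide

end RhDo

/-- **The open zonotope and the rhombic dodecahedron.**
For `n ≥ 1` the Minkowski sum `Z` of the open segments `(0, π·eⱼ)`,
`j = 0, …, n`, equals the open zonotope
`{θ ∈ (−π, π)ⁿ : |θᵢ − θⱼ| < π for all i < j}`.  For `n = 3` the resulting
polytope (the rhombic dodecahedron, the closure of `Z`) has `12` facets,
`24` edges and `14` vertices, counted as the nonempty exposed faces whose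
affine span has dimension `2`, `1` and `0` respectively. -/
theorem minkZ_eq_zonotope_and_rhombicDodecahedron_face_counts :
    (∀ n : ℕ, 1 ≤ n → minkZ n =
      {θ : Fin n → ℝ | (∀ i, θ i ∈ Set.Ioo (-π) π) ∧
        ∀ i j : Fin n, i < j → |θ i - θ j| < π}) ∧
    (Nat.card {F : Set (Fin 3 → ℝ) // F.Nonempty ∧
        IsExposed ℝ (closure (minkZ 3)) F ∧
        Module.finrank ℝ (affineSpan ℝ F).direction = 2} = 12) ∧
    (Nat.card {F : Set (Fin 3 → ℝ) // F.Nonempty ∧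
        IsExposed ℝ (closure (minkZ 3)) F ∧
        Module.finrank ℝ (affineSpan ℝ F).direction = 1} = 24) ∧
    (Nat.card {F : Set (Fin 3 → ℝ) // F.Nonempty ∧
        IsExposed ℝ (closure (minkZ 3)) F ∧
        Module.finrank ℝ (affineSpan ℝ F).direction = 0} = 14) := by
  refine ⟨part1, ?_, ?_, ?_⟩
  · simp only [RhDo.closure_minkZ3]
    rw [RhDo.card_faces 2 (by omega), RhDo.card_sig_two]
  · simp only [RhDo.closure_minkZ3]
    rw [RhDo.card_faces 1 (by omega), RhDo.card_sig_one]
  · simp only [RhDo.closure_minkZ3]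
    rw [RhDo.card_faces 0 (by omega), RhDo.card_sig_zero]
end
end
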